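/- For p ∈ (1, 2] and all x, y > 0, one has r(x,y)(log x - log y)(Φ_p'(x) - Φ_p'(y)) ≥ (4/p)(x^{p/2} - y^{p/2})², whenever r : (0,∞)² → (0,∞) satisfies (x-y)/(log x - log y) ≤ r(x,y) for x ≠ y (and r(x,x) = x). -/

import Mathlib

/-!
Since `x ^ (p / 2) - y ^ (p / 2) = (p / 2) ∫_y^x s ^ (p / 2 - 1) ds`, the Cauchy–Schwarz inequality
on the interval between `y` and `x` bounds `(4 / p) (x ^ (p / 2) - y ^ (p / 2)) ^ 2` by
`(x - y) (Φ_p'(x) - Φ_p'(y))`. Here `x - y` is the logarithmic mean of `x, y` times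
`log x - log y`, so `(log x - log y) (Φ_p'(x) - Φ_p'(y)) ≥ 0`, and replacing the logarithmic mean
by the larger `r x y` only increases the product.
-/

open Real MeasureTheory

theorem sq_intervalIntegral_le_mul_integral_sq {f : ℝ → ℝ} {a b : ℝ}
    (hf : IntervalIntegrable f volume a b) (hf2 : IntervalIntegrable (fun t => f t ^ 2) volume a b) :
    (∫ t in a..b, f t) ^ 2 ≤ (b - a) * ∫ t in a..b, f t ^ 2 := by
  wlog hab : a ≤ b generalizing a b
  · have := this hf.symm hf2.symm (le_of_not_ge hab)
    rw [intervalIntegral.integral_symm a, intervalIntegral.integral_symm a b] at this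
    linarith
  set I := ∫ t in a..b, f t with hI
  have hexpand : ∫ t in a..b, ((b - a) * f t - I) ^ 2 =
      (b - a) * ((b - a) * (∫ t in a..b, f t ^ 2) - I ^ 2) := by
    have hpoint : ∀ t, ((b - a) * f t - I) ^ 2 =
        (b - a) ^ 2 * f t ^ 2 - (2 * (b - a) * I) * f t + I ^ 2 := fun t => by ring
    simp_rw [hpoint]
    rw [intervalIntegral.integral_add ((hf2.const_mul _).sub (hf.const_mul _))
        intervalIntegrable_const,
      intervalIntegral.integral_sub (hf2.const_mul _) (hf.const_mul _),
      intervalIntegral.integral_const_mul, intervalIntegral.integral_const_mul, ← hI,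
      intervalIntegral.integral_const, smul_eq_mul]
    ring
  have hnonneg : 0 ≤ ∫ t in a..b, ((b - a) * f t - I) ^ 2 :=
    intervalIntegral.integral_nonneg hab fun _ _ => sq_nonneg _
  rcases hab.eq_or_lt with rfl | hlt
  · simp [I]
  · rw [hexpand, mul_nonneg_iff_of_pos_left (sub_pos.2 hlt)] at hnonneg
    linarith

theorem sq_two_div_mul_rpow_half_sub_le {p x y : ℝ} (hp0 : p ≠ 0) (hp1 : p ≠ 1)
    (hx : 0 < x) (hy : 0 < y) :
    (2 / p * (x ^ (p / 2) - y ^ (p / 2))) ^ 2 ≤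
      (x - y) * ((x ^ (p - 1) - y ^ (p - 1)) / (p - 1)) := by
  have hpos : ∀ s ∈ Set.uIcc y x, 0 < s := fun s hs =>
    (lt_min hy hx).trans_le (by simpa using hs.1)
  have hcont : ContinuousOn (fun s : ℝ => s ^ (p / 2 - 1)) (Set.uIcc y x) :=
    continuousOn_id.rpow_const fun s hs => Or.inl (hpos s hs).ne'
  have hint : ∫ s in y..x, s ^ (p / 2 - 1) = 2 / p * (x ^ (p / 2) - y ^ (p / 2)) := by
    rw [integral_rpow (Or.inr ⟨by contrapose! hp0; linarith, Set.notMem_uIcc_of_lt hy hx⟩),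
      sub_add_cancel]
    field_simp
  have hint_sq : ∫ s in y..x, (s ^ (p / 2 - 1)) ^ 2 = (x ^ (p - 1) - y ^ (p - 1)) / (p - 1) := by
    rw [intervalIntegral.integral_congr (g := fun s => s ^ (p - 2)) fun s hs => by
        rw [← rpow_natCast, ← rpow_mul (hpos s hs).le]; congr 1; ring,
      integral_rpow (Or.inr ⟨by contrapose! hp1; linarith, Set.notMem_uIcc_of_lt hy hx⟩),
      show p - 2 + 1 = p - 1 by ring]
  rw [← hint, ← hint_sq]
  exact sq_intervalIntegral_le_mul_integral_sq hcont.intervalIntegrable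
    (hcont.pow 2).intervalIntegrable

theorem four_div_mul_sq_rpow_half_sub_le {p x y : ℝ} (hp0 : 0 < p) (hp1 : p ≠ 1)
    (hx : 0 < x) (hy : 0 < y) :
    4 / p * (x ^ (p / 2) - y ^ (p / 2)) ^ 2 ≤
      (x - y) * (p * (x ^ (p - 1) - 1) / (p - 1) - p * (y ^ (p - 1) - 1) / (p - 1)) := by
  have hp1' : p - 1 ≠ 0 := sub_ne_zero.2 hp1
  calc 4 / p * (x ^ (p / 2) - y ^ (p / 2)) ^ 2
      = p * (2 / p * (x ^ (p / 2) - y ^ (p / 2))) ^ 2 := by field_simp; ring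
    _ ≤ p * ((x - y) * ((x ^ (p - 1) - y ^ (p - 1)) / (p - 1))) :=
      mul_le_mul_of_nonneg_left (sq_two_div_mul_rpow_half_sub_le hp0.ne' hp1 hx hy) hp0.le
    _ = (x - y) * (p * (x ^ (p - 1) - 1) / (p - 1) - p * (y ^ (p - 1) - 1) / (p - 1)) := by
      field_simp; ring

theorem sub_mul_le_mul_log_sub_mul {x y r d : ℝ} (hx : 0 < x) (hy : 0 < y)
    (hr : (x - y) / (log x - log y) ≤ r) (hd : 0 ≤ (x - y) * d) :
    (x - y) * d ≤ r * (log x - log y) * d := by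
  rcases lt_trichotomy x y with hxy | rfl | hxy
  · have hlog : log x - log y < 0 := sub_neg.2 (log_lt_log hx hxy)
    exact mul_le_mul_of_nonpos_right ((div_le_iff_of_neg hlog).1 hr)
      (nonpos_of_mul_nonneg_right hd (sub_neg.2 hxy))
  · simp
  · have hlog : 0 < log x - log y := sub_pos.2 (log_lt_log hy hxy)
    exact mul_le_mul_of_nonneg_right ((div_le_iff₀ hlog).1 hr)
      (nonneg_of_mul_nonneg_right hd (sub_pos.2 hxy))

theorem dissipation_lower_bound_general (p : ℝ) (hp : p ∈ Set.Ioc (1 : ℝ) 2)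
    (r : ℝ → ℝ → ℝ)
    (hr_low : ∀ x y : ℝ, 0 < x → 0 < y → x ≠ y →
      (x - y) / (Real.log x - Real.log y) ≤ r x y)
    (x y : ℝ) (hx : 0 < x) (hy : 0 < y) :
    (4 / p) * (x ^ (p / 2) - y ^ (p / 2)) ^ 2 ≤
      r x y * (Real.log x - Real.log y) *
        ((p * (x ^ (p - 1) - 1) / (p - 1)) - (p * (y ^ (p - 1) - 1) / (p - 1))) := by
  rcases eq_or_ne x y with rfl | hxy
  · simp
  have hp0 : 0 < p := zero_lt_one.trans hp.1
  have hbound := four_div_mul_sq_rpow_half_sub_le hp0 hp.1.ne' hx hy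
  have hsq_nonneg : 0 ≤ 4 / p * (x ^ (p / 2) - y ^ (p / 2)) ^ 2 := by positivity
  exact hbound.trans <|
    sub_mul_le_mul_log_sub_mul hx hy (hr_low x y hx hy hxy) (hsq_nonneg.trans hbound)

theorem dissipation_lower_bound (p : ℝ) (hp : p ∈ Set.Ioc (1 : ℝ) 2)
    (r : ℝ → ℝ → ℝ)
    (hr_low : ∀ x y : ℝ, 0 < x → 0 < y → x ≠ y →
      (x - y) / (Real.log x - Real.log y) ≤ r x y)
    (hr_diag : ∀ x : ℝ, 0 < x → r x x = x)
    (x y : ℝ) (hx : 0 < x) (hy : 0 < y) :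
    (4 / p) * (x ^ (p / 2) - y ^ (p / 2)) ^ 2 ≤
      r x y * (Real.log x - Real.log y) *
        ((p * (x ^ (p - 1) - 1) / (p - 1)) - (p * (y ^ (p - 1) - 1) / (p - 1))) :=
  dissipation_lower_bound_general p hp r hr_low x y hx hy
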